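/- For every integer s ≥ 0, every probe (P2+sP1)-free graph is (s+1)P2-free. -/

import Mathlib

/-!
An induced copy of `(s+1)P₂` in `G` has a probe endpoint on each of its edges, since the
non-probes are independent. The edges added to `G` join non-probes only, so a probe has the same
neighbours after the completion as before. Hence the first edge of the copy, together with a
probe endpoint of each of the other `s` edges, induces `P₂ + sP₁` in the completion.
-/

open SimpleGraph

/-- `H` does not occur as an induced subgraph of `G`. -/
def IndFree {W V : Type*} (H : SimpleGraph W) (G : SimpleGraph V) : Prop :=
  IsEmpty (H ↪g G)

/-- `(G, Nᶜ, N)` is a partitioned probe `H`-free graph. -/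
def PartProbeFree {W V : Type*} (H : SimpleGraph W) (G : SimpleGraph V) (N : Set V) : Prop :=
  (∀ u ∈ N, ∀ v ∈ N, ¬ G.Adj u v) ∧
  ∃ G' : SimpleGraph V, G ≤ G' ∧
    (∀ u v, G'.Adj u v → ¬ G.Adj u v → u ∈ N ∧ v ∈ N) ∧ IndFree H G'

/-- `G` is a probe `H`-free graph (for some choice of non-probes). -/
def ProbeFree {W V : Type*} (H : SimpleGraph W) (G : SimpleGraph V) : Prop :=
  ∃ N : Set V, PartProbeFree H G N

/-- The graph `P₂ + sP₁`: one edge (between vertices `0` and `1`) plus `s` isolated vertices. -/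
def P2sP1 (s : ℕ) : SimpleGraph (Fin (s + 2)) :=
  SimpleGraph.fromRel (fun i j => (i : ℕ) = 0 ∧ (j : ℕ) = 1)

/-- The graph `nP₂`: a disjoint union of `n` edges, pairing `2k` with `2k+1`. -/
def nP2 (n : ℕ) : SimpleGraph (Fin (2 * n)) :=
  SimpleGraph.fromRel (fun i j => (i : ℕ) / 2 = (j : ℕ) / 2)

namespace P2sP1

variable {s : ℕ}

lemma adj_iff {i j : Fin (s + 2)} :
    (P2sP1 s).Adj i j ↔ (i = 0 ∧ j = 1) ∨ (i = 1 ∧ j = 0) := by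
  simp only [P2sP1, fromRel_adj, Fin.ext_iff, Fin.val_zero, Fin.val_one]
  omega

theorem nonempty_embedding {V : Type*} {H : SimpleGraph V} {a b : V} {c : Fin s → V}
    (hab : H.Adj a b) (hc : Function.Injective c) (hca : ∀ k, ¬ H.Adj (c k) a)
    (hcb : ∀ k, ¬ H.Adj (c k) b) (hcc : ∀ k l, ¬ H.Adj (c k) (c l)) :
    Nonempty (P2sP1 s ↪g H) := by
  let f : Fin (s + 2) → V := Fin.cons a (Fin.cons b c : Fin (s + 1) → V)
  have hf : Function.Injective f := by
    simp only [f, Fin.cons_injective_iff, Set.mem_range, not_exists, Fin.forall_fin_succ,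
      Fin.cons_zero, Fin.cons_succ]
    exact ⟨⟨hab.ne', fun k hk => hcb k (hk ▸ hab)⟩,
      fun k hk => hca k (hk ▸ hab.symm), hc⟩
  have hadj : ∀ i j, H.Adj (f i) (f j) ↔ (P2sP1 s).Adj i j := by
    simp only [f, Fin.forall_fin_succ, Fin.cons_zero, Fin.cons_succ, adj_iff]
    simp [hab, hab.symm, hca, hcb, hcc, H.adj_comm _ (c _), Fin.succ_succ_ne_one]
  exact ⟨⟨⟨f, hf⟩, hadj _ _⟩⟩

end P2sP1

namespace nP2

variable {n : ℕ}

lemma adj_iff {i j : Fin (2 * n)} :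
    (nP2 n).Adj i j ↔ i ≠ j ∧ (i : ℕ) / 2 = (j : ℕ) / 2 := by
  simp only [nP2, fromRel_adj, eq_comm (a := (j : ℕ) / 2), or_self]

lemma adj_even_odd (k : Fin n) : (nP2 n).Adj ⟨2 * k, by omega⟩ ⟨2 * k + 1, by omega⟩ :=
  adj_iff.2 ⟨by simp [Fin.ext_iff], by dsimp only; omega⟩

theorem exists_notMem {V : Type*} {G : SimpleGraph V} (e : nP2 n ↪g G) {N : Set V}
    (hN : ∀ u ∈ N, ∀ v ∈ N, ¬ G.Adj u v) (k : Fin n) :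
    ∃ i : Fin (2 * n), (i : ℕ) / 2 = k ∧ e i ∉ N := by
  by_contra! h
  exact hN _ (h _ (by dsimp only; omega)) _ (h _ (by dsimp only; omega))
    (e.map_rel_iff.2 (adj_even_odd k))

end nP2

lemma adj_of_adj_of_notMem {V : Type*} {G G' : SimpleGraph V} {N : Set V}
    (hF : ∀ u v, G'.Adj u v → ¬ G.Adj u v → u ∈ N ∧ v ∈ N) {u v : V} (hu : u ∉ N)
    (h : G'.Adj u v) : G.Adj u v :=
  by_contra fun h' => hu (hF u v h h').1

theorem stmt_7_general (s : ℕ) {V : Type*} (G : SimpleGraph V)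
    (hprobe : ProbeFree (P2sP1 s) G) :
    IndFree (nP2 (s + 1)) G := by
  obtain ⟨N, hN, G', hle, hF, hfree⟩ := hprobe
  refine ⟨fun e => ?_⟩
  choose p hp hpN using nP2.exists_notMem e hN
  have hp_inj : Function.Injective p := fun k l h => Fin.ext (by rw [← hp k, ← hp l, h])
  have hsep : ∀ i j : Fin (2 * (s + 1)), e i ∉ N → (i : ℕ) / 2 ≠ (j : ℕ) / 2 →
      ¬ G'.Adj (e i) (e j) :=
    fun i j hi hij h => hij (nP2.adj_iff.1 (e.map_rel_iff.1 (adj_of_adj_of_notMem hF hi h))).2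
  obtain ⟨f⟩ := P2sP1.nonempty_embedding (H := G') (c := fun k => e (p k.succ))
    (hle (e.map_rel_iff.2 (nP2.adj_even_odd 0)))
    (e.injective.comp (hp_inj.comp (Fin.succ_injective _)))
    (fun k => hsep _ _ (hpN _) (by simp [hp]))
    (fun k => hsep _ _ (hpN _) (by simp [hp]))
    (fun k l => by
      rcases eq_or_ne k l with rfl | hkl
      · exact G'.irrefl
      · exact hsep _ _ (hpN _) (by simpa [hp, Fin.val_eq_val] using hkl))
  exact hfree.false f

theorem stmt_7 (s : ℕ) {V : Type*} [Fintype V] (G : SimpleGraph V)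
    (hprobe : ProbeFree (P2sP1 s) G) :
    IndFree (nP2 (s + 1)) G :=
  stmt_7_general s G hprobe
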